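/- Let f : ℝ → ℝ be continuous and monotone. Then L_f^∞ = {x ∈ ℝ : Lip f(x) = ∞} is a G_δ set of Lebesgue measure zero. -/

import Mathlib

open Set Filter MeasureTheory Topology
open scoped ENNReal NNReal

/-- `M_f(x,r) = sup { |f(x)-f(y)|/r : |x-y| ≤ r }`, valued in `[0,∞]`. -/
noncomputable def Mf (f : ℝ → ℝ) (x r : ℝ) : ℝ≥0∞ :=
  ⨆ y ∈ {y : ℝ | |x - y| ≤ r}, ENNReal.ofReal (|f x - f y| / r)

/-- The big Lip function: `Lip f(x) = limsup_{r→0⁺} M_f(x,r)`. -/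
noncomputable def bigLip (f : ℝ → ℝ) (x : ℝ) : ℝ≥0∞ :=
  Filter.limsup (fun r => Mf f x r) (𝓝[>] (0 : ℝ))

/-- The little lip function: `lip f(x) = liminf_{r→0⁺} M_f(x,r)`. -/
noncomputable def litLip (f : ℝ → ℝ) (x : ℝ) : ℝ≥0∞ :=
  Filter.liminf (fun r => Mf f x r) (𝓝[>] (0 : ℝ))

/-- A set `E ⊆ ℝ` is trim if `λ(E ∩ (a,b)) < b - a` for every open interval `(a,b)`. -/
def Trim (E : Set ℝ) : Prop :=
  ∀ a b : ℝ, a < b → volume (E ∩ Ioo a b) < ENNReal.ofReal (b - a)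

/-!
For fixed `r`, `x ↦ M_f(x,r)` is a supremum of the continuous functions
`x ↦ |f x - f (x + t)| / r` over `|t| ≤ r`, hence lower semicontinuous, so each
`{x | n < M_f(x,r)}` is open. `Lip f(x) = ∞` says that for every `n` these sets contain `x`
for arbitrarily small `r`; as `𝓝[>] 0` is countably generated this is a `G_δ` condition.
Where `f` is differentiable, `Lip f(x)` is finite, and a monotone function is differentiable
almost everywhere (Lebesgue).
-/

theorem ENNReal.limsup_eq_top_iff {α : Type*} {l : Filter α} {u : α → ℝ≥0∞} :
    limsup u l = ⊤ ↔ ∀ n : ℕ, ∃ᶠ a in l, (n : ℝ≥0∞) < u a := by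
  refine ⟨fun h n => ?_, fun h => ?_⟩
  · exact frequently_lt_of_lt_limsup (by isBoundedDefault) (h ▸ ENNReal.natCast_lt_top n)
  · rw [eq_top_iff, ← ENNReal.iSup_natCast]
    exact iSup_le fun n => le_limsup_of_frequently_le' ((h n).mono fun _ => le_of_lt)

theorem isGδ_setOf_forall_frequently {X α ι : Type*} [TopologicalSpace X] [Countable ι]
    {l : Filter α} [l.IsCountablyGenerated] {p : ι → X → α → Prop}
    (hp : ∀ i a, IsOpen {x | p i x a}) : IsGδ {x | ∀ i, ∃ᶠ a in l, p i x a} := by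
  obtain ⟨s, hs⟩ := l.exists_antitone_basis
  have hset : {x | ∀ i, ∃ᶠ a in l, p i x a} = ⋂ i, ⋂ k, ⋃ a ∈ s k, {x | p i x a} := by
    ext x
    simp [hs.toHasBasis.frequently_iff]
  rw [hset]
  exact .iInter fun i => .iInter fun k => (isOpen_biUnion fun a _ => hp i a).isGδ

theorem Antitone.ae_differentiableAt {f : ℝ → ℝ} (hf : Antitone f) :
    ∀ᵐ x, DifferentiableAt ℝ f x := by
  filter_upwards [hf.neg.ae_differentiableAt] with x hx
  simpa using hx.neg

theorem Mf_eq_iSup_add (f : ℝ → ℝ) (x r : ℝ) :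
    Mf f x r = ⨆ t : {t : ℝ // |t| ≤ r}, ENNReal.ofReal (|f x - f (x + t)| / r) := by
  refine le_antisymm (iSup₂_le fun y hy => ?_) (iSup_le fun t => ?_)
  · have ht : |y - x| ≤ r := by rwa [abs_sub_comm]
    exact le_iSup_of_le ⟨y - x, ht⟩ (by simp)
  · have hy : |x - (x + t)| ≤ r := by simpa using t.2
    exact le_iSup₂_of_le (x + t) hy le_rfl

theorem lowerSemicontinuous_Mf {f : ℝ → ℝ} (hf : Continuous f) (r : ℝ) :
    LowerSemicontinuous fun x => Mf f x r := by
  simp_rw [Mf_eq_iSup_add]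
  exact lowerSemicontinuous_iSup fun t =>
    (ENNReal.continuous_ofReal.comp (by fun_prop)).lowerSemicontinuous

theorem isGδ_setOf_bigLip_eq_top {f : ℝ → ℝ} (hf : Continuous f) :
    IsGδ {x | bigLip f x = ⊤} := by
  simp_rw [bigLip, ENNReal.limsup_eq_top_iff]
  exact isGδ_setOf_forall_frequently fun n r => (lowerSemicontinuous_Mf hf r).isOpen_preimage n

theorem Mf_le_of_forall_abs_sub_le {f : ℝ → ℝ} {x r C : ℝ} (hr : 0 < r) (hC : 0 ≤ C)
    (h : ∀ y, |y - x| ≤ r → |f y - f x| ≤ C * |y - x|) : Mf f x r ≤ ENNReal.ofReal C := by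
  refine iSup₂_le fun y hy => ENNReal.ofReal_le_ofReal ?_
  rw [mem_ofPred_eq, abs_sub_comm] at hy
  rw [div_le_iff₀ hr, abs_sub_comm]
  exact (h y hy).trans (mul_le_mul_of_nonneg_left hy hC)

theorem bigLip_le_of_eventually_abs_sub_le {f : ℝ → ℝ} {x C : ℝ} (hC : 0 ≤ C)
    (h : ∀ᶠ y in 𝓝 x, |f y - f x| ≤ C * |y - x|) : bigLip f x ≤ ENNReal.ofReal C := by
  obtain ⟨ε, hε, hball⟩ := Metric.eventually_nhds_iff.1 h
  refine limsup_le_of_le (by isBoundedDefault) ?_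
  filter_upwards [Ioo_mem_nhdsGT hε] with r hr
  exact Mf_le_of_forall_abs_sub_le hr.1 hC fun y hy => hball (hy.trans_lt hr.2)

theorem DifferentiableAt.bigLip_lt_top {f : ℝ → ℝ} {x : ℝ} (hf : DifferentiableAt ℝ f x) :
    bigLip f x < ⊤ := by
  obtain ⟨C, hC, hO⟩ := hf.hasDerivAt.isBigO_sub.exists_pos
  exact (bigLip_le_of_eventually_abs_sub_le hC.le hO.bound).trans_lt ENNReal.ofReal_lt_top

/-- If `f : ℝ → ℝ` is continuous and monotone, then `L_f^∞` is a `G_δ` set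
of Lebesgue measure zero. -/
theorem Lip_infinite_set_of_monotone (f : ℝ → ℝ) (hf : Continuous f)
    (hmono : Monotone f ∨ Antitone f) :
    IsGδ {x : ℝ | bigLip f x = ⊤} ∧ volume {x : ℝ | bigLip f x = ⊤} = 0 := by
  refine ⟨isGδ_setOf_bigLip_eq_top hf, ?_⟩
  have hdiff : ∀ᵐ x, DifferentiableAt ℝ f x :=
    hmono.elim Monotone.ae_differentiableAt Antitone.ae_differentiableAt
  exact measure_mono_null
    (fun x hx (hd : DifferentiableAt ℝ f x) => hd.bigLip_lt_top.ne hx) (ae_iff.1 hdiff)
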